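/- Let n ≥ 2 and let R = ℂ[x₁,…,xₙ,y₁,…,yₙ]/(y_i² − x_i³ + x_i : 1 ≤ i ≤ n), an integral domain with fraction field L. For 1 ≤ k ≤ n−1 let σ_k be the ℂ-algebra automorphism of L induced by x_k ↦ −x_k, y_k ↦ i·y_k, xₙ ↦ −xₙ, yₙ ↦ i·yₙ (i ∈ ℂ a primitive 4-th root of unity), fixing x_j, y_j for j ∉ {k,n}. Then the fixed field L^{⟨σ₁,…,σ_{n−1}⟩} is generated over ℂ by the n + 1 elements x₁², x₂², …, xₙ² and z₂ = y₁y₂⋯y_{n−1}·yₙ^{−1}; that is, L^{⟨σ₁,…,σ_{n−1}⟩} = ℂ(x₁²,…,xₙ²,z₂) as subfields of L. -/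

import Mathlib

set_option synthInstance.maxHeartbeats 1000000
set_option maxHeartbeats 1000000

open MvPolynomial

/-- The coordinate ring `R = ℂ[x₁,…,xₙ,y₁,…,yₙ]/(yᵢ² - xᵢ³ + xᵢ : 1 ≤ i ≤ n)` of the product
of the `n` curves `yᵢ² = xᵢ³ - xᵢ`.  The variable `Sum.inl i` is `xᵢ` and `Sum.inr i` is
`yᵢ`. -/
noncomputable abbrev quarticRing (n : ℕ) : Type :=
  MvPolynomial (Fin n ⊕ Fin n) ℂ ⧸
    Ideal.span (Set.range fun i : Fin n =>
      (X (Sum.inr i) : MvPolynomial (Fin n ⊕ Fin n) ℂ) ^ 2 - X (Sum.inl i) ^ 3 + X (Sum.inl i))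

/-- The class of `xᵢ` in the fraction field `L` of `R`. -/
noncomputable def xg (n : ℕ) (i : Fin n) : FractionRing (quarticRing n) :=
  algebraMap (quarticRing n) _ (Ideal.Quotient.mk _ (X (Sum.inl i)))

/-- The class of `yᵢ` in the fraction field `L` of `R`. -/
noncomputable def yg (n : ℕ) (i : Fin n) : FractionRing (quarticRing n) :=
  algebraMap (quarticRing n) _ (Ideal.Quotient.mk _ (X (Sum.inr i)))

/-!
Put `K = ℂ(x₁², …, xₙ², z₂)`. The `σₖ` fix `K`, so they are `K`-linear. Since
`yᵢ⁴ = xᵢ²(xᵢ² - 1)² ∈ K`, `xᵢ = yᵢ² / (xᵢ² - 1)` and `yₙ = z₂⁻¹ y₁⋯yₙ₋₁`, the field `L` is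
generated over `K` by the algebraic elements `y₁, …, yₙ₋₁`, so it is spanned over `K` by the
monomials `y₁^e₁⋯yₙ₋₁^eₙ₋₁`, and `σₖ` multiplies such a monomial by `i^eₖ`. Averaging over
the powers of each `σₖ` projects a fixed element onto the span of the fixed monomials, which
are those with every `eₖ` divisible by `4`, hence lie in `K`.
-/

section Averaging

open Submodule

variable {F V : Type*} [Field F] [AddCommGroup V] [Module F V]

theorem sum_range_pow_apply_of_fixed (f : Module.End F V) (m : ℕ) {v : V} (hv : f v = v) :
    ∑ i ∈ Finset.range m, (f ^ i) v = (m : F) • v := by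
  simp [Module.End.pow_apply, Function.iterate_fixed hv, Nat.cast_smul_eq_nsmul]

theorem sum_range_pow_apply_eq_zero_of_eigen (f : Module.End F V) {m : ℕ} {ζ : F}
    (hζ : ζ ^ m = 1) {v : V} (hv : f v = ζ • v) (hfv : f v ≠ v) :
    ∑ i ∈ Finset.range m, (f ^ i) v = 0 := by
  have hpow : ∀ i, (f ^ i) v = ζ ^ i • v := by
    intro i
    induction i with
    | zero => simp
    | succ i ih => rw [pow_succ', Module.End.mul_apply, ih, map_smul, hv, smul_smul, pow_succ]
  have hζ1 : ζ ≠ 1 := by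
    rintro rfl
    simp [hv] at hfv
  simp only [hpow, ← Finset.sum_smul, geom_sum_eq hζ1, hζ, sub_self, zero_div, zero_smul]

theorem mem_span_fixed_of_mem_span_eigen {m : ℕ} (hm : (m : F) ≠ 0) (f : Module.End F V)
    {S : Set V} (hS : ∀ v ∈ S, ∃ ζ : F, ζ ^ m = 1 ∧ f v = ζ • v) {u : V} (hu : u ∈ span F S)
    (hfix : f u = u) : u ∈ span F {v ∈ S | f v = v} := by
  set P : Module.End F V := ∑ i ∈ Finset.range m, f ^ i
  have hP : ∀ v, P v = ∑ i ∈ Finset.range m, (f ^ i) v := LinearMap.sum_apply _ _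
  have hPS : span F S ≤ (span F {v ∈ S | f v = v}).comap P := by
    refine span_le.mpr fun v hv => ?_
    obtain ⟨ζ, hζ, hfv⟩ := hS v hv
    by_cases h : f v = v
    · simpa [hP, sum_range_pow_apply_of_fixed f m h] using
        smul_mem _ (m : F) (subset_span (show v ∈ {v ∈ S | f v = v} from ⟨hv, h⟩))
    · simp [hP, sum_range_pow_apply_eq_zero_of_eigen f hζ hfv h]
  have hPu := hPS hu
  rw [mem_comap, hP, sum_range_pow_apply_of_fixed f m hfix] at hPu
  simpa [hm] using smul_mem _ (m : F)⁻¹ hPu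

theorem mem_span_fixed_of_mem_span_eigen_family {m : ℕ} (hm : (m : F) ≠ 0) {κ : Type*}
    [Fintype κ] (f : κ → Module.End F V) {S : Set V}
    (hS : ∀ k, ∀ v ∈ S, ∃ ζ : F, ζ ^ m = 1 ∧ f k v = ζ • v) {u : V} (hu : u ∈ span F S)
    (hfix : ∀ k, f k u = u) : u ∈ span F {v ∈ S | ∀ k, f k v = v} := by
  classical
  suffices ∀ s : Finset κ, u ∈ span F {v ∈ S | ∀ k ∈ s, f k v = v} by
    simpa using this Finset.univ
  intro s
  induction s using Finset.induction_on with
  | empty => simpa using hu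
  | insert j s _ ih =>
    refine span_mono ?_ (mem_span_fixed_of_mem_span_eigen hm (f j)
      (fun v hv => hS j v hv.1) ih (hfix j))
    rintro v ⟨⟨hvS, hvs⟩, hvj⟩
    exact ⟨hvS, Finset.forall_mem_insert _ _ _ |>.mpr ⟨hvj, hvs⟩⟩

end Averaging

theorem Fin.prod_univ_erase_last {M : Type*} [CommMonoid M] {m : ℕ} (f : Fin (m + 1) → M) :
    ∏ i ∈ Finset.univ.erase (Fin.last m), f i = ∏ k : Fin m, f k.castSucc := by
  rw [← Finset.compl_singleton, ← Fin.image_castSucc,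
    Finset.prod_image fun _ _ _ _ h => Fin.castSucc_injective _ h]

section QuarticCurves

variable {n : ℕ}

theorem yg_sq (i : Fin n) : yg n i ^ 2 = xg n i * (xg n i ^ 2 - 1) := by
  have hrel : Ideal.Quotient.mk _ ((X (Sum.inr i) : MvPolynomial (Fin n ⊕ Fin n) ℂ) ^ 2
      - X (Sum.inl i) ^ 3 + X (Sum.inl i)) = (0 : quarticRing n) :=
    Ideal.Quotient.eq_zero_iff_mem.mpr (Ideal.subset_span ⟨i, rfl⟩)
  have := congrArg (algebraMap (quarticRing n) (FractionRing (quarticRing n))) hrel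
  simp only [map_add, map_sub, map_pow, map_zero] at this
  change yg n i ^ 2 - xg n i ^ 3 + xg n i = 0 at this
  linear_combination this

theorem algebraMap_mk_eq_aeval (P : MvPolynomial (Fin n ⊕ Fin n) ℂ) :
    algebraMap (quarticRing n) (FractionRing (quarticRing n)) (Ideal.Quotient.mk _ P) =
      aeval (Sum.elim (xg n) (yg n)) P := by
  have : (IsScalarTower.toAlgHom ℂ (quarticRing n) (FractionRing (quarticRing n))).comp
      (Ideal.Quotient.mkₐ ℂ _) = aeval (Sum.elim (xg n) (yg n)) :=
    algHom_ext fun v => by cases v <;> simp [xg, yg, Ideal.Quotient.mkₐ_eq_mk]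
  exact congr($this P)

/-- The point `(i, 1 - i)` lies on `y² = x³ - x`. -/
theorem aeval_ne_zero_of_eval_ne_zero {P : MvPolynomial (Fin n ⊕ Fin n) ℂ}
    (hP : eval (Sum.elim (fun _ => Complex.I) (fun _ => 1 - Complex.I)) P ≠ 0) :
    aeval (Sum.elim (xg n) (yg n)) P ≠ 0 := by
  rw [← algebraMap_mk_eq_aeval]
  intro h
  have hI : Ideal.Quotient.mk _ P = (0 : quarticRing n) :=
    IsFractionRing.injective (quarticRing n) (FractionRing (quarticRing n)) (by simpa using h)
  refine hP ((?_ : _ ≤ RingHom.ker (eval _)) (Ideal.Quotient.eq_zero_iff_mem.mp hI))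
  rw [Ideal.span_le]
  rintro _ ⟨i, rfl⟩
  simp only [SetLike.mem_coe, RingHom.mem_ker, map_add, map_sub, map_pow, eval_X,
    Sum.elim_inl, Sum.elim_inr]
  ring_nf
  simp only [Complex.I_sq, Complex.I_pow_three]
  ring

theorem yg_ne_zero (i : Fin n) : yg n i ≠ 0 := by
  have := aeval_ne_zero_of_eval_ne_zero (n := n) (P := X (Sum.inr i))
    (by simp [sub_eq_zero, Complex.ext_iff])
  rwa [aeval_X, Sum.elim_inr] at this

theorem xg_sq_sub_one_ne_zero (i : Fin n) : xg n i ^ 2 - 1 ≠ 0 := by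
  have := aeval_ne_zero_of_eval_ne_zero (n := n) (P := X (Sum.inl i) ^ 2 - 1) (by norm_num)
  rwa [map_sub, map_pow, aeval_X, map_one, Sum.elim_inl] at this

end QuarticCurves

section FixedField

variable {m : ℕ}

local notation "𝕃" => FractionRing (quarticRing (m + 1))

/-- With `n = m + 1`, the paper's index `n` is `Fin.last m`, and `1, …, n - 1` are the
`k.castSucc`. -/
noncomputable def ygMonomial (m : ℕ) (e : Fin m → ℕ) : FractionRing (quarticRing (m + 1)) :=
  ∏ k, yg (m + 1) k.castSucc ^ e k

theorem sigma_yg_castSucc {ι : ℂ} (σ : Fin m → 𝕃 ≃ₐ[ℂ] 𝕃)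
    (hσyk : ∀ k, σ k (yg (m + 1) k.castSucc) = algebraMap ℂ 𝕃 ι * yg (m + 1) k.castSucc)
    (hσyj : ∀ k j, j ≠ k.castSucc → j ≠ Fin.last m → σ k (yg (m + 1) j) = yg (m + 1) j)
    (j k : Fin m) :
    σ j (yg (m + 1) k.castSucc) =
      algebraMap ℂ 𝕃 (if k = j then ι else 1) * yg (m + 1) k.castSucc := by
  split_ifs with h
  · rw [h]
    exact hσyk j
  · rw [map_one, one_mul]
    exact hσyj j _ (fun h' => h (Fin.castSucc_injective _ h')) (Fin.castSucc_ne_last k)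

theorem sigma_ygMonomial {ι : ℂ} (σ : Fin m → 𝕃 ≃ₐ[ℂ] 𝕃)
    (hy : ∀ j k, σ j (yg (m + 1) k.castSucc) =
      algebraMap ℂ 𝕃 (if k = j then ι else 1) * yg (m + 1) k.castSucc)
    (j : Fin m) (e : Fin m → ℕ) :
    σ j (ygMonomial m e) = algebraMap ℂ 𝕃 (ι ^ e j) * ygMonomial m e := by
  simp only [ygMonomial, map_prod, map_pow, hy, mul_pow, Finset.prod_mul_distrib]
  simp [← map_pow, ← map_prod, ite_pow]

theorem sigma_xg_sq (σ : Fin m → 𝕃 ≃ₐ[ℂ] 𝕃)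
    (hσxk : ∀ k, σ k (xg (m + 1) k.castSucc) = -xg (m + 1) k.castSucc)
    (hσxn : ∀ k, σ k (xg (m + 1) (Fin.last m)) = -xg (m + 1) (Fin.last m))
    (hσxj : ∀ k j, j ≠ k.castSucc → j ≠ Fin.last m → σ k (xg (m + 1) j) = xg (m + 1) j)
    (j : Fin m) (i : Fin (m + 1)) : σ j (xg (m + 1) i ^ 2) = xg (m + 1) i ^ 2 := by
  rw [map_pow]
  induction i using Fin.lastCases with
  | last => rw [hσxn, neg_sq]
  | cast k =>
    by_cases h : k = j
    · rw [h, hσxk, neg_sq]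
    · rw [hσxj j _ (fun h' => h (Fin.castSucc_injective _ h')) (Fin.castSucc_ne_last k)]

variable [IsDomain (quarticRing (m + 1))]

noncomputable def zg (m : ℕ) [IsDomain (quarticRing (m + 1))] :
    FractionRing (quarticRing (m + 1)) :=
  (∏ i ∈ Finset.univ.erase (Fin.last m), yg (m + 1) i) * (yg (m + 1) (Fin.last m))⁻¹

noncomputable def invariantField (m : ℕ) [IsDomain (quarticRing (m + 1))] :
    IntermediateField ℂ (FractionRing (quarticRing (m + 1))) :=
  IntermediateField.adjoin ℂ (Set.range (fun i => xg (m + 1) i ^ 2) ∪ {zg m})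

theorem xg_sq_mem_invariantField (i : Fin (m + 1)) : xg (m + 1) i ^ 2 ∈ invariantField m :=
  IntermediateField.subset_adjoin _ _ (Or.inl ⟨i, rfl⟩)

theorem zg_mem_invariantField : zg m ∈ invariantField m :=
  IntermediateField.subset_adjoin _ _ (Or.inr rfl)

theorem yg_pow_four_mem_invariantField (i : Fin (m + 1)) :
    yg (m + 1) i ^ 4 ∈ invariantField m := by
  rw [show yg (m + 1) i ^ 4 = xg (m + 1) i ^ 2 * (xg (m + 1) i ^ 2 - 1) ^ 2 by
    linear_combination (yg (m + 1) i ^ 2 + xg (m + 1) i * (xg (m + 1) i ^ 2 - 1)) * yg_sq i]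
  have hx := xg_sq_mem_invariantField i
  exact mul_mem hx (pow_mem (sub_mem hx (one_mem _)) 2)

theorem yg_last_eq :
    yg (m + 1) (Fin.last m) = (zg m)⁻¹ * ∏ k : Fin m, yg (m + 1) k.castSucc := by
  have h : ∏ k : Fin m, yg (m + 1) k.castSucc ≠ 0 :=
    Finset.prod_ne_zero_iff.mpr fun k _ => yg_ne_zero _
  rw [zg, Fin.prod_univ_erase_last, mul_inv, inv_inv, mul_comm, mul_inv_cancel_left₀ h]

theorem adjoin_yg_castSucc_eq_top :
    IntermediateField.adjoin (invariantField m) (Set.range fun k : Fin m => yg (m + 1) k.castSucc)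
      = ⊤ := by
  set E := IntermediateField.adjoin (invariantField m)
    (Set.range fun k : Fin m => yg (m + 1) k.castSucc)
  have hK : ∀ x ∈ invariantField m, x ∈ E := fun x hx => E.algebraMap_mem ⟨x, hx⟩
  have hy : ∀ i, yg (m + 1) i ∈ E := by
    intro i
    induction i using Fin.lastCases with
    | last =>
      rw [yg_last_eq]
      exact mul_mem (hK _ (inv_mem zg_mem_invariantField))
        (prod_mem fun k _ => IntermediateField.subset_adjoin _ _ ⟨k, rfl⟩)
    | cast k => exact IntermediateField.subset_adjoin _ _ ⟨k, rfl⟩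
  have hx : ∀ i, xg (m + 1) i ∈ E := by
    intro i
    rw [show xg (m + 1) i = (xg (m + 1) i ^ 2 - 1)⁻¹ * yg (m + 1) i ^ 2 by
      rw [yg_sq, mul_comm (xg _ _), inv_mul_cancel_left₀ (xg_sq_sub_one_ne_zero i)]]
    exact mul_mem (hK _ (inv_mem (sub_mem (xg_sq_mem_invariantField i) (one_mem _))))
      (pow_mem (hy i) 2)
  have hR : ∀ r, algebraMap (quarticRing (m + 1)) 𝕃 r ∈ E := by
    intro r
    obtain ⟨P, rfl⟩ := Ideal.Quotient.mk_surjective r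
    rw [algebraMap_mk_eq_aeval]
    induction P using MvPolynomial.induction_on with
    | C a => simpa using hK _ ((invariantField m).algebraMap_mem a)
    | add p q hp hq => simpa using add_mem hp hq
    | mul_X p v hp => simpa using mul_mem hp (by cases v <;> simp [hx, hy])
  refine eq_top_iff.mpr fun f _ => ?_
  obtain ⟨p, q, -, rfl⟩ := IsFractionRing.div_surjective (quarticRing (m + 1)) f
  exact div_mem (hR p) (hR q)

theorem mem_span_range_ygMonomial (f : 𝕃) :
    f ∈ Submodule.span (invariantField m) (Set.range (ygMonomial m)) := by
  have halg : ∀ x ∈ Set.range (fun k : Fin m => yg (m + 1) k.castSucc),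
      IsAlgebraic (invariantField m) x := by
    rintro _ ⟨k, rfl⟩
    refine (IsIntegral.of_pow four_pos ?_).isAlgebraic
    exact isIntegral_algebraMap (x := (⟨_, yg_pow_four_mem_invariantField _⟩ : invariantField m))
  have hf : f ∈ (IntermediateField.adjoin (invariantField m)
      (Set.range fun k : Fin m => yg (m + 1) k.castSucc)).toSubalgebra := by
    rw [adjoin_yg_castSucc_eq_top]
    trivial
  rw [IntermediateField.adjoin_toSubalgebra_of_isAlgebraic halg, ← Subalgebra.mem_toSubmodule,
    Algebra.adjoin_eq_span] at hf
  have hS : Set.range (ygMonomial m) =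
      Submonoid.closure (Set.range fun k : Fin m => yg (m + 1) k.castSucc) := by
    ext
    simp [ygMonomial, Submonoid.mem_closure_range_iff_of_fintype, eq_comm]
  rwa [hS]

theorem sigma_zg {ι : ℂ} (hι : ι ≠ 0) (σ : Fin m → 𝕃 ≃ₐ[ℂ] 𝕃)
    (hy : ∀ j k, σ j (yg (m + 1) k.castSucc) =
      algebraMap ℂ 𝕃 (if k = j then ι else 1) * yg (m + 1) k.castSucc)
    (hσyn : ∀ k, σ k (yg (m + 1) (Fin.last m)) = algebraMap ℂ 𝕃 ι * yg (m + 1) (Fin.last m))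
    (j : Fin m) : σ j (zg m) = zg m := by
  have hprod := sigma_ygMonomial σ hy j 1
  simp only [ygMonomial, Pi.one_apply, pow_one] at hprod
  rw [zg, Fin.prod_univ_erase_last, map_mul, map_inv₀, hprod, hσyn, mul_inv,
    mul_mul_mul_comm, mul_inv_cancel₀ ((map_ne_zero _).mpr hι), one_mul]

theorem sigma_apply_of_mem_invariantField (σ : Fin m → 𝕃 ≃ₐ[ℂ] 𝕃)
    (ht : ∀ j i, σ j (xg (m + 1) i ^ 2) = xg (m + 1) i ^ 2) (hz : ∀ j, σ j (zg m) = zg m)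
    (j : Fin m) {x : 𝕃} (hx : x ∈ invariantField m) : σ j x = x := by
  refine RingHom.eqOn_field_closure (f := (σ j : 𝕃 →+* 𝕃)) (g := RingHom.id 𝕃) ?_ hx
  rintro _ (⟨c, rfl⟩ | ⟨i, rfl⟩ | rfl)
  · exact (σ j).commutes c
  · exact ht j i
  · exact hz j

theorem ygMonomial_mem_invariantField_of_fixed {ι : ℂ} (hι : IsPrimitiveRoot ι 4)
    (σ : Fin m → 𝕃 ≃ₐ[ℂ] 𝕃)
    (hy : ∀ j k, σ j (yg (m + 1) k.castSucc) =
      algebraMap ℂ 𝕃 (if k = j then ι else 1) * yg (m + 1) k.castSucc)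
    (e : Fin m → ℕ) (hfix : ∀ j, σ j (ygMonomial m e) = ygMonomial m e) :
    ygMonomial m e ∈ invariantField m := by
  by_cases hw : ygMonomial m e = 0
  · rw [hw]
    exact zero_mem _
  have hdvd : ∀ j, 4 ∣ e j := fun j => by
    have h := hfix j
    rw [sigma_ygMonomial σ hy, mul_eq_right₀ hw,
      map_eq_one_iff _ (algebraMap ℂ 𝕃).injective] at h
    exact (hι.pow_eq_one_iff_dvd _).mp h
  rw [ygMonomial, Finset.prod_congr rfl fun k _ => by
    rw [← Nat.mul_div_cancel' (hdvd k), pow_mul]]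
  exact prod_mem fun k _ => pow_mem (yg_pow_four_mem_invariantField _) _

theorem mem_invariantField_of_fixed {ι : ℂ} (hι : IsPrimitiveRoot ι 4)
    (σ : Fin m → 𝕃 ≃ₐ[ℂ] 𝕃)
    (hy : ∀ j k, σ j (yg (m + 1) k.castSucc) =
      algebraMap ℂ 𝕃 (if k = j then ι else 1) * yg (m + 1) k.castSucc)
    (hK : ∀ j, ∀ x ∈ invariantField m, σ j x = x) {f : 𝕃} (hf : ∀ j, σ j f = f) :
    f ∈ invariantField m := by
  set K := invariantField m
  let τ : Fin m → Module.End K 𝕃 := fun j =>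
    (K.fixingSubgroupEquiv ⟨σ j, (K.mem_fixingSubgroup_iff _).mpr (hK j)⟩).toLinearMap
  have heig : ∀ j, ∀ v ∈ Set.range (ygMonomial m), ∃ ζ : K, ζ ^ 4 = 1 ∧ τ j v = ζ • v := by
    rintro j _ ⟨e, rfl⟩
    refine ⟨algebraMap ℂ K (ι ^ e j), ?_, ?_⟩
    · rw [← map_pow, ← pow_mul, mul_comm, pow_mul, hι.pow_eq_one, one_pow, map_one]
    · rw [algebraMap_smul, Algebra.smul_def]
      exact sigma_ygMonomial σ hy j e
  have hfix := mem_span_fixed_of_mem_span_eigen_family (m := 4) (by norm_num) τ heig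
    (mem_span_range_ygMonomial f) hf
  have hle : Submodule.span K {v ∈ Set.range (ygMonomial m) | ∀ j, τ j v = v} ≤ 1 := by
    refine Submodule.span_le.mpr ?_
    rintro _ ⟨⟨e, rfl⟩, hv⟩
    exact Submodule.mem_one.mpr ⟨⟨_, ygMonomial_mem_invariantField_of_fixed hι σ hy e hv⟩, rfl⟩
  obtain ⟨c, rfl⟩ := Submodule.mem_one.mp (hle hfix)
  exact c.2

end FixedField

/-- the fixed field of `L = Frac(R)` under the `ℂ`-algebra automorphisms
`σ₁, …, σ_{n-1}` (where `σₖ` sends `xₖ ↦ -xₖ`, `yₖ ↦ i·yₖ`, `xₙ ↦ -xₙ`, `yₙ ↦ i·yₙ` for a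
primitive 4th root of unity `i ∈ ℂ` and fixes the other variables) is generated over `ℂ`
by `x₁², …, xₙ²` and `z₂ = y₁y₂⋯y_{n-1}·yₙ⁻¹`; that is, it equals the subfield
`ℂ(x₁²,…,xₙ²,z₂)` of `L`. -/
theorem stmt_14 (n : ℕ) (hn : 2 ≤ n) [IsDomain (quarticRing n)]
    (ι : ℂ) (hι : IsPrimitiveRoot ι 4)
    (σ : Fin (n - 1) → (FractionRing (quarticRing n) ≃ₐ[ℂ] FractionRing (quarticRing n)))
    (hσxk : ∀ k : Fin (n - 1),
      σ k (xg n (Fin.castLE (Nat.sub_le n 1) k)) = -xg n (Fin.castLE (Nat.sub_le n 1) k))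
    (hσyk : ∀ k : Fin (n - 1),
      σ k (yg n (Fin.castLE (Nat.sub_le n 1) k)) =
        algebraMap ℂ (FractionRing (quarticRing n)) ι * yg n (Fin.castLE (Nat.sub_le n 1) k))
    (hσxn : ∀ k : Fin (n - 1), σ k (xg n ⟨n - 1, by omega⟩) = -xg n ⟨n - 1, by omega⟩)
    (hσyn : ∀ k : Fin (n - 1),
      σ k (yg n ⟨n - 1, by omega⟩) =
        algebraMap ℂ (FractionRing (quarticRing n)) ι * yg n ⟨n - 1, by omega⟩)
    (hσxj : ∀ (k : Fin (n - 1)) (j : Fin n),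
      j ≠ Fin.castLE (Nat.sub_le n 1) k → j ≠ ⟨n - 1, by omega⟩ → σ k (xg n j) = xg n j)
    (hσyj : ∀ (k : Fin (n - 1)) (j : Fin n),
      j ≠ Fin.castLE (Nat.sub_le n 1) k → j ≠ ⟨n - 1, by omega⟩ → σ k (yg n j) = yg n j) :
    {f : FractionRing (quarticRing n) | ∀ k, σ k f = f} =
      ↑(Subfield.closure
        (Set.range (algebraMap ℂ (FractionRing (quarticRing n))) ∪
         Set.range (fun i : Fin n => xg n i ^ 2) ∪
         {(∏ i ∈ Finset.univ.erase (⟨n - 1, by omega⟩ : Fin n), yg n i) *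
            (yg n ⟨n - 1, by omega⟩)⁻¹})) := by
  obtain ⟨m, rfl⟩ : ∃ m, n = m + 1 := ⟨n - 1, by omega⟩
  have hy := sigma_yg_castSucc (m := m) σ hσyk hσyj
  have hK : ∀ j, ∀ x ∈ invariantField m, σ j x = x :=
    sigma_apply_of_mem_invariantField (m := m) σ (sigma_xg_sq (m := m) σ hσxk hσxn hσxj)
      (sigma_zg (m := m) (hι.ne_zero four_ne_zero) σ hy hσyn)
  rw [Set.union_assoc]
  exact Set.Subset.antisymm (fun f hf => mem_invariantField_of_fixed (m := m) hι σ hy hK hf)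
    fun f hf j => hK j f hf
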